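/- arXiv:1405.0144 — 2 statements merged into one kernel-verified Lean document; each statement's English description precedes it below -/
import Mathlib

section
/- For every real $\lambda > 0$ and every $k \in \mathbb{N}$, the $k$-th Taylor coefficient at $w = 0$ of the function $w \mapsto \frac{1+w}{1-w}\, h_{1-\lambda}(w)$ (which is analytic on the open unit disk) is strictly positive; that is, the discrete-time integrator term of the LDPID controller forms a positive-weighted sum of the samples of its input when $\lambda > 0$. -/
/-!
Because `(1 + w) / (1 - w) = h_{-1}(w)`, the function in question is `g = h_{-λ}` near `0`, and
`g` solves `(1 - w²) g' = 2λ g`. Differentiating this `n + 1` times at `0` gives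
`g⁽ⁿ⁺²⁾(0) = 2λ g⁽ⁿ⁺¹⁾(0) + (n + 1) n g⁽ⁿ⁾(0)` with `g(0) = 1` and `g'(0) = 2λ`, so every
derivative of `g` at `0` is positive by induction.
-/

open Complex Finset

/-- The function `h_μ(w) = exp(μ · Log((1-w)/(1+w)))`, defined via the principal
branch of the complex logarithm. -/
noncomputable def h (μ : ℝ) (w : ℂ) : ℂ :=
  Complex.exp ((μ : ℂ) * Complex.log ((1 - w) / (1 + w)))

/-- `f k μ` is the `k`-th Taylor coefficient of `h μ` at `w = 0`,
i.e. `h_μ^{(k)}(0)/k!`. -/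
noncomputable def f (μ : ℝ) (k : ℕ) : ℂ :=
  iteratedDeriv k (h μ) 0 / (Nat.factorial k : ℂ)

open scoped ComplexOrder

theorem Complex.exists_ofReal_pos_of_pos {z : ℂ} (hz : 0 < z) : ∃ r : ℝ, 0 < r ∧ z = r :=
  ⟨z.re, (pos_iff.1 hz).1, Complex.ext rfl (pos_iff.1 hz).2.symm⟩

theorem iteratedDeriv_sq_mul_zero {𝕜 : Type*} [NontriviallyNormedField 𝕜] {G : 𝕜 → 𝕜}
    {n : ℕ} (hG : ContDiffAt 𝕜 n G 0) :
    iteratedDeriv n (fun x => x ^ 2 * G x) 0 = n.descFactorial 2 * iteratedDeriv (n - 2) G 0 := by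
  have hpow (i : ℕ) : iteratedDeriv i (· ^ 2) (0 : 𝕜) = if i = 2 then 2 else 0 := by
    simpa using iteratedDeriv_fun_pow_zero (n := i) (m := 2)
  rw [iteratedDeriv_fun_mul (by fun_prop) hG, Finset.sum_eq_single 2
    (fun i _ hi => by simp [hpow, hi])
    (fun h2 => by simp [Nat.choose_eq_zero_of_lt (by simpa using h2 : n < 2)]),
    hpow, if_pos rfl, Nat.descFactorial_eq_factorial_mul_choose]
  push_cast
  ring

theorem eventually_norm_lt_one {E : Type*} [SeminormedAddGroup E] :
    ∀ᶠ x : E in nhds 0, ‖x‖ < 1 := by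
  filter_upwards [Metric.ball_mem_nhds (0 : E) one_pos] with x hx using mem_ball_zero_iff.1 hx

section UnitDisk

variable {w : ℂ} (hw : ‖w‖ < 1)
include hw

theorem one_add_ne_zero_of_norm_lt_one : 1 + w ≠ 0 := by
  intro h0
  simp [eq_neg_of_add_eq_zero_right h0] at hw

theorem one_sub_ne_zero_of_norm_lt_one : 1 - w ≠ 0 := by
  intro h0
  simp [(sub_eq_zero.1 h0).symm] at hw

theorem one_sub_div_one_add_mem_slitPlane : (1 - w) / (1 + w) ∈ slitPlane := by
  have hnormSq : w.re * w.re + w.im * w.im < 1 := by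
    rw [← Complex.normSq_apply, ← Complex.sq_norm]
    nlinarith [norm_nonneg w]
  refine Complex.mem_slitPlane_iff.2 (Or.inl ?_)
  rw [Complex.div_re, ← add_div]
  refine div_pos ?_ (Complex.normSq_pos.2 (one_add_ne_zero_of_norm_lt_one hw))
  simp only [sub_re, add_re, one_re, sub_im, add_im, one_im]
  nlinarith

variable (μ : ℝ)

theorem analyticAt_h : AnalyticAt ℂ (h μ) w := by
  have hcayley : AnalyticAt ℂ (fun w : ℂ => (1 - w) / (1 + w)) w :=
    (analyticAt_const.sub analyticAt_id).div (analyticAt_const.add analyticAt_id)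
      (one_add_ne_zero_of_norm_lt_one hw)
  exact (analyticAt_const.mul (hcayley.clog (one_sub_div_one_add_mem_slitPlane hw))).cexp

theorem hasDerivAt_h : HasDerivAt (h μ) (-2 * μ / (1 - w ^ 2) * h μ w) w := by
  have h1 := one_add_ne_zero_of_norm_lt_one hw
  have h2 := one_sub_ne_zero_of_norm_lt_one hw
  have hcayley : HasDerivAt (fun w : ℂ => (1 - w) / (1 + w))
      ((-1 * (1 + w) - (1 - w) * 1) / (1 + w) ^ 2) w :=
    ((hasDerivAt_id w).const_sub 1).div ((hasDerivAt_id w).const_add 1) h1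
  refine (((hcayley.clog (one_sub_div_one_add_mem_slitPlane hw)).const_mul (μ : ℂ)).cexp
    ).congr_deriv ?_
  rw [show (1 : ℂ) - w ^ 2 = (1 - w) * (1 + w) by ring, h]
  field_simp
  ring

theorem h_add_one : h (μ + 1) w = (1 - w) / (1 + w) * h μ w := by
  have hne := div_ne_zero (one_sub_ne_zero_of_norm_lt_one hw) (one_add_ne_zero_of_norm_lt_one hw)
  rw [h, h, Complex.ofReal_add, Complex.ofReal_one, add_mul, one_mul, Complex.exp_add,
    Complex.exp_log hne, mul_comm]

-- `(1 - w²) h_μ' = -2μ h_μ`, in the form whose iterated derivatives at `0` give a recurrence.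
theorem deriv_h_eq : deriv (h μ) w = -2 * μ * h μ w + w ^ 2 * deriv (h μ) w := by
  have hsq : (1 : ℂ) - w ^ 2 ≠ 0 := by
    rw [show (1 : ℂ) - w ^ 2 = (1 - w) * (1 + w) by ring]
    exact mul_ne_zero (one_sub_ne_zero_of_norm_lt_one hw) (one_add_ne_zero_of_norm_lt_one hw)
  rw [(hasDerivAt_h hw μ).deriv]
  field_simp
  ring

end UnitDisk

section TaylorCoefficients

variable (μ : ℝ)

theorem iteratedDeriv_zero_h : iteratedDeriv 0 (h μ) 0 = 1 := by
  simp [h]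

theorem iteratedDeriv_one_h : iteratedDeriv 1 (h μ) 0 = -2 * μ := by
  rw [iteratedDeriv_one, (hasDerivAt_h (by simp) μ).deriv]
  simp [h]

theorem iteratedDeriv_h_add_two (n : ℕ) :
    iteratedDeriv (n + 2) (h μ) 0 =
      -2 * μ * iteratedDeriv (n + 1) (h μ) 0 + (n + 1) * n * iteratedDeriv n (h μ) 0 := by
  have hode : deriv (h μ) =ᶠ[nhds 0] fun w => -2 * μ * h μ w + w ^ 2 * deriv (h μ) w :=
    eventually_norm_lt_one.mono fun w hw => deriv_h_eq hw μ
  have hh : AnalyticAt ℂ (h μ) 0 := analyticAt_h (by simp) μ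
  have hderiv : AnalyticAt ℂ (deriv (h μ)) 0 := hh.deriv
  rw [iteratedDeriv_succ', hode.iteratedDeriv_eq,
    iteratedDeriv_fun_add (contDiffAt_const.mul hh.contDiffAt)
      (contDiffAt_fun_id.pow 2 |>.mul hderiv.contDiffAt),
    iteratedDeriv_const_mul_field, iteratedDeriv_sq_mul_zero hderiv.contDiffAt]
  rcases n with _ | n
  · simp
  · rw [show n + 1 + 1 - 2 = n by omega, ← iteratedDeriv_succ', Nat.descFactorial_succ,
      Nat.descFactorial_one]
    push_cast [Nat.add_sub_cancel]
    ring

theorem iteratedDeriv_h_pos (hμ : μ < 0) (n : ℕ) : 0 < iteratedDeriv n (h μ) 0 := by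
  have h2μ : (0 : ℂ) < -2 * μ := by exact_mod_cast (by linarith : 0 < -2 * μ)
  suffices ∀ n, 0 < iteratedDeriv n (h μ) 0 ∧ 0 < iteratedDeriv (n + 1) (h μ) 0 from (this n).1
  intro n
  induction n with
  | zero => exact ⟨by simp [iteratedDeriv_zero_h], by rwa [iteratedDeriv_one_h]⟩
  | succ n ih =>
    refine ⟨ih.2, ?_⟩
    rw [iteratedDeriv_h_add_two]
    exact add_pos_of_pos_of_nonneg (mul_pos h2μ ih.2)
      (mul_nonneg (by positivity) ih.1.le)

end TaylorCoefficients

/-- For every real `λ > 0`, the function `w ↦ (1+w)/(1-w) · h_{1-λ}(w)` is analytic on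
the open unit disk and each of its Taylor coefficients at `w = 0` is a strictly positive
real number: the discrete-time integrator term of the LDPID controller forms a
positive-weighted sum of the samples of its input when `λ > 0`. -/
theorem integrator_coefficients_pos (lam : ℝ) (hlam : 0 < lam) :
    AnalyticOnNhd ℂ (fun w : ℂ => (1 + w) / (1 - w) * h (1 - lam) w) (Metric.ball 0 1) ∧
      ∀ k : ℕ, ∃ r : ℝ, 0 < r ∧
        iteratedDeriv k (fun w : ℂ => (1 + w) / (1 - w) * h (1 - lam) w) 0 /
          (Nat.factorial k : ℂ) = (r : ℂ) := by
  refine ⟨fun w hw => ?_, fun k => Complex.exists_ofReal_pos_of_pos ?_⟩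
  · rw [mem_ball_zero_iff] at hw
    exact ((analyticAt_const.add analyticAt_id).div (analyticAt_const.sub analyticAt_id)
      (one_sub_ne_zero_of_norm_lt_one hw)).mul (analyticAt_h hw _)
  · have hfun : (fun w : ℂ => (1 + w) / (1 - w) * h (1 - lam) w) =ᶠ[nhds 0] h (-lam) := by
      filter_upwards [eventually_norm_lt_one] with w hw
      have h1 := one_add_ne_zero_of_norm_lt_one hw
      have h2 := one_sub_ne_zero_of_norm_lt_one hw
      rw [show 1 - lam = -lam + 1 by ring, h_add_one hw]
      field_simp
    rw [hfun.iteratedDeriv_eq]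
    exact div_pos (iteratedDeriv_h_pos _ (by linarith) k) (by exact_mod_cast k.factorial_pos)
end

section
/- For every real $\mu > 0$, the radius of convergence of the power series $\sum_{k=0}^{\infty} f_k(\mu)\, w^k$ is exactly $1$. -/
/-!
`h μ` is holomorphic on the unit disc, since `(1 - w) / (1 + w)` maps it into the right half-plane,
so its Taylor series at `0` converges to it there and has radius at least `1`. On `(-1, 1)` we have
`h μ x = ((1 - x) / (1 + x)) ^ μ`, which blows up as `x → -1⁺` when `μ > 0`; a radius larger than `1`
would make the sum of the series, hence `h μ`, bounded near `-1`.
-/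

open Complex Finset

open Filter Topology Metric FormalMultilinearSeries
open scoped ENNReal

theorem DifferentiableOn.hasFPowerSeriesOnBall_taylorSeries {f : ℂ → ℂ} {c : ℂ} {r : ℝ≥0∞}
    (hf : DifferentiableOn ℂ f (eball c r)) (hr : 0 < r) :
    HasFPowerSeriesOnBall f (ofScalars ℂ fun n => iteratedDeriv n f c / n.factorial) c r := by
  refine (hf.analyticOnNhd isOpen_eball).analyticOn.hasFPowerSeriesOnSubball hr ?_
  refine ENNReal.le_of_forall_nnreal_lt fun ρ hρ => ?_
  have hmem : c + (ρ : ℂ) ∈ eball c r := by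
    simpa [edist_dist, dist_eq_norm] using hρ
  have hsum := (Complex.hasSum_taylorSeries_on_eball hf hmem).summable
  refine le_radius_of_tendsto _ (l := 0) ?_
  simpa [ofScalars_norm, norm_smul, norm_pow, mul_comm, div_eq_inv_mul, mul_assoc]
    using hsum.tendsto_atTop_zero.norm

theorem HasFPowerSeriesOnBall.radius_le_of_tendsto_norm_atTop
    {𝕜 E F α : Type*} [NontriviallyNormedField 𝕜] [NormedAddCommGroup E] [NormedSpace 𝕜 E]
    [NormedAddCommGroup F] [NormedSpace 𝕜 F] [CompleteSpace F]
    {f : E → F} {p : FormalMultilinearSeries 𝕜 E F} {x z : E} {r : ℝ≥0∞}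
    {l : Filter α} [l.NeBot] {u : α → E}
    (hf : HasFPowerSeriesOnBall f p x r) (hu : Tendsto u l (𝓝 z))
    (hur : ∀ᶠ a in l, u a ∈ eball x r) (hfu : Tendsto (fun a => ‖f (u a)‖) l atTop) :
    p.radius ≤ edist z x := by
  by_contra! hz
  have hcont : ContinuousAt p.sum (z - x) :=
    p.continuousOn.continuousAt (isOpen_eball.mem_nhds (by simpa [edist_eq_enorm_sub] using hz))
  have hlim : Tendsto (fun a => p.sum (u a - x)) l (𝓝 (p.sum (z - x))) :=
    hcont.tendsto.comp (hu.sub_const x)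
  have hsum : ∀ᶠ a in l, p.sum (u a - x) = f (u a) := hur.mono fun a ha => by
    rw [← hf.sum (by simpa [edist_eq_enorm_sub] using ha), add_sub_cancel]
  exact not_tendsto_atTop_of_tendsto_nhds (hlim.norm.congr' (hsum.mono fun a ha => by rw [ha])) hfu

theorem re_one_sub_div_one_add_pos {w : ℂ} (hw : ‖w‖ < 1) : 0 < ((1 - w) / (1 + w)).re := by
  have hne : 1 + w ≠ 0 := fun h0 => by
    simp [show w = -1 by linear_combination h0] at hw
  have hnum : (1 - w).re * (1 + w).re + (1 - w).im * (1 + w).im = 1 - ‖w‖ ^ 2 := by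
    rw [Complex.sq_norm, normSq_apply]
    simp only [sub_re, one_re, add_re, sub_im, one_im, zero_sub, add_im, zero_add, neg_mul]
    ring
  rw [div_re, ← add_div, hnum]
  exact div_pos (by nlinarith [norm_nonneg w]) (normSq_pos.mpr hne)

theorem differentiableOn_h (μ : ℝ) : DifferentiableOn ℂ (h μ) (ball 0 1) := by
  intro w hw
  rw [mem_ball_zero_iff] at hw
  have hre := re_one_sub_div_one_add_pos hw
  have hne : 1 + w ≠ 0 := fun h0 => by simp [h0] at hre
  have hdiv : DifferentiableAt ℂ (fun w : ℂ => (1 - w) / (1 + w)) w := by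
    fun_prop (disch := exact hne)
  exact ((hdiv.clog (Or.inl hre)).const_mul _).cexp.differentiableWithinAt

theorem h_ofReal (μ : ℝ) {x : ℝ} (hx₀ : -1 < x) (hx₁ : x < 1) :
    h μ x = (((1 - x) / (1 + x)) ^ μ : ℝ) := by
  have hpos : 0 < (1 - x) / (1 + x) := div_pos (by linarith) (by linarith)
  rw [h, ofReal_cpow hpos.le, cpow_def_of_ne_zero (by exact_mod_cast hpos.ne'), mul_comm]
  push_cast
  rfl

theorem tendsto_norm_h_nhdsGT_neg_one (μ : ℝ) (hμ : 0 < μ) :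
    Tendsto (fun x : ℝ => ‖h μ x‖) (𝓝[>] (-1)) atTop := by
  have hden : Tendsto (fun x : ℝ => 1 + x) (𝓝[>] (-1)) (𝓝[>] 0) :=
    tendsto_nhdsWithin_iff.mpr
      ⟨((continuous_const.add continuous_id).tendsto' (-1) 0 (by norm_num)).mono_left
        nhdsWithin_le_nhds, eventually_nhdsWithin_of_forall fun x hx => by
          simp only [Set.mem_Ioi] at hx ⊢; linarith⟩
  have hnum : Tendsto (fun x : ℝ => 1 - x) (𝓝[>] (-1)) (𝓝 2) :=
    ((continuous_const.sub continuous_id).tendsto' (-1) 2 (by norm_num)).mono_left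
      nhdsWithin_le_nhds
  have hratio : Tendsto (fun x : ℝ => (1 - x) / (1 + x)) (𝓝[>] (-1)) atTop := by
    simpa [div_eq_mul_inv] using hnum.pos_mul_atTop two_pos (tendsto_inv_nhdsGT_zero.comp hden)
  refine ((tendsto_rpow_atTop hμ).comp hratio).congr' ?_
  filter_upwards [Ioo_mem_nhdsGT (show (-1 : ℝ) < 1 by norm_num)] with x hx
  rw [Function.comp_apply, h_ofReal μ hx.1 hx.2, norm_real, Real.norm_of_nonneg
    (Real.rpow_nonneg (div_pos (by linarith [hx.2]) (by linarith [hx.1])).le _)]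

/-- For every real `μ > 0`, the radius of convergence of `∑ₖ f_k(μ) wᵏ` is exactly `1`. -/
theorem f_series_radius (μ : ℝ) (hμ : 0 < μ) :
    (FormalMultilinearSeries.ofScalars ℂ (f μ)).radius = 1 := by
  have hball : eball (0 : ℂ) 1 = ball 0 1 := by
    rw [← ENNReal.coe_one, eball_coe, NNReal.coe_one]
  have hp : HasFPowerSeriesOnBall (h μ) (ofScalars ℂ (f μ)) 0 1 :=
    (hball ▸ differentiableOn_h μ).hasFPowerSeriesOnBall_taylorSeries one_pos
  refine le_antisymm ?_ hp.r_le
  have hu : Tendsto (fun x : ℝ => (x : ℂ)) (𝓝[>] (-1)) (𝓝 (-1 : ℝ)) :=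
    continuous_ofReal.continuousAt.tendsto.mono_left nhdsWithin_le_nhds
  have hmem : ∀ᶠ x : ℝ in 𝓝[>] (-1), (x : ℂ) ∈ eball 0 1 := by
    filter_upwards [Ioo_mem_nhdsGT (show (-1 : ℝ) < 1 by norm_num)] with x hx
    simpa [hball, abs_lt] using hx
  simpa using hp.radius_le_of_tendsto_norm_atTop hu hmem (tendsto_norm_h_nhdsGT_neg_one μ hμ)
end
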